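/- Let Z be a (G,H)-equivalence with Haar systems λ on G and β on H. The C_c(H)-valued pre-inner product ⟨φ,ψ⟩_H(η) = ∫_G \overline{φ(γ⁻¹·z)} ψ(γ⁻¹·z·η) dλ^{r(z)}(γ) (for any z with s(z) = r(η)) is well defined: the value is independent of the choice of z ∈ Z with s(z) = r(η). -/

import Mathlib

/-! Since `s(z) = s(z')`, some `γ₀ ∈ G` carries `z` to `z'`, and the substitution `γ ↦ γ₀γ`
turns the integrand at `z'` into the one at `z`; left invariance of `λ` then gives the claim.
Left invariance is only available for functions in `C_c(G)`, whereas the integrand at `z'` is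
only defined on the closed fibre `r⁻¹(r(z'))`. There it is continuous, and it vanishes off a
compact set because the `G`-action is proper, so a Tietze extension multiplied by a compactly
supported cutoff produces a function in `C_c(G)` that agrees with it `λ^{r(z')}`-almost
everywhere. -/

open MeasureTheory Topology

/-- A (topological) groupoid: a space `G` with range and source maps `r s : G → G`
(whose common image is the unit space), a partially defined multiplication and an
inversion, all continuous. -/
structure TopGpd (G : Type*) [TopologicalSpace G] where
  r : G → G
  s : G → G
  mul : (x y : G) → s x = r y → G
  inv : G → G
  r_r : ∀ x, r (r x) = r x
  s_r : ∀ x, s (r x) = r x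
  r_s : ∀ x, r (s x) = s x
  s_s : ∀ x, s (s x) = s x
  r_mul : ∀ x y h, r (mul x y h) = r x
  s_mul : ∀ x y h, s (mul x y h) = s y
  unit_mul : ∀ x (h : s (r x) = r x), mul (r x) x h = x
  mul_unit : ∀ x (h : s x = r (s x)), mul x (s x) h = x
  mul_assoc : ∀ x y z (h₁ : s x = r y) (h₂ : s y = r z)
      (h₃ : s (mul x y h₁) = r z) (h₄ : s x = r (mul y z h₂)),
      mul (mul x y h₁) z h₃ = mul x (mul y z h₂) h₄
  r_inv : ∀ x, r (inv x) = s x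
  s_inv : ∀ x, s (inv x) = r x
  inv_mul : ∀ x (h : s (inv x) = r x), mul (inv x) x h = s x
  mul_inv : ∀ x (h : s x = r (inv x)), mul x (inv x) h = r x
  cont_r : Continuous r
  cont_s : Continuous s
  cont_inv : Continuous inv
  cont_mul : Continuous fun p : {p : G × G // s p.1 = r p.2} => mul p.1.1 p.1.2 p.2

/-- A `(G,H)`-equivalence: a locally compact space `Z` with commuting free and proper
left `G`- and right `H`-actions whose moment maps `ρ` and `σ` are continuous, open,
and induce bijections `Z/H ≅ G⁰` and `G\Z ≅ H⁰`. -/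
structure GpdEquiv {G H : Type*} [TopologicalSpace G] [TopologicalSpace H]
    (𝒢 : TopGpd G) (ℋ : TopGpd H) (Z : Type*) [TopologicalSpace Z] where
  ρ : Z → G
  σ : Z → H
  ρ_unit : ∀ z, 𝒢.r (ρ z) = ρ z
  σ_unit : ∀ z, ℋ.r (σ z) = σ z
  ρ_cont : Continuous ρ
  σ_cont : Continuous σ
  ρ_open : IsOpenMap ρ
  σ_open : IsOpenMap σ
  lact : (γ : G) → (z : Z) → 𝒢.s γ = ρ z → Z
  ract : (z : Z) → (η : H) → σ z = ℋ.r η → Z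
  ρ_lact : ∀ γ z h, ρ (lact γ z h) = 𝒢.r γ
  σ_lact : ∀ γ z h, σ (lact γ z h) = σ z
  ρ_ract : ∀ z η h, ρ (ract z η h) = ρ z
  σ_ract : ∀ z η h, σ (ract z η h) = ℋ.s η
  lact_unit : ∀ z (h : 𝒢.s (ρ z) = ρ z), lact (ρ z) z h = z
  ract_unit : ∀ z (h : σ z = ℋ.r (σ z)), ract z (σ z) h = z
  lact_mul : ∀ γ γ' z (h : 𝒢.s γ = 𝒢.r γ') (h' : 𝒢.s γ' = ρ z)
      (h'' : 𝒢.s (𝒢.mul γ γ' h) = ρ z) (h''' : 𝒢.s γ = ρ (lact γ' z h')),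
      lact (𝒢.mul γ γ' h) z h'' = lact γ (lact γ' z h') h'''
  ract_mul : ∀ z η η' (h : σ z = ℋ.r η) (h' : ℋ.s η = ℋ.r η')
      (h'' : σ z = ℋ.r (ℋ.mul η η' h')) (h''' : σ (ract z η h) = ℋ.r η'),
      ract z (ℋ.mul η η' h') h'' = ract (ract z η h) η' h'''
  act_comm : ∀ γ z η (h₁ : 𝒢.s γ = ρ z) (h₂ : σ z = ℋ.r η)
      (h₃ : σ (lact γ z h₁) = ℋ.r η) (h₄ : 𝒢.s γ = ρ (ract z η h₂)),
      ract (lact γ z h₁) η h₃ = lact γ (ract z η h₂) h₄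
  lact_free : ∀ γ z h, lact γ z h = z → γ = ρ z
  ract_free : ∀ z η h, ract z η h = z → η = σ z
  lact_cont : Continuous fun p : {p : G × Z // 𝒢.s p.1 = ρ p.2} =>
      lact p.1.1 p.1.2 p.2
  ract_cont : Continuous fun p : {p : Z × H // σ p.1 = ℋ.r p.2} =>
      ract p.1.1 p.1.2 p.2
  lact_proper : IsProperMap fun p : {p : G × Z // 𝒢.s p.1 = ρ p.2} =>
      (lact p.1.1 p.1.2 p.2, p.1.2)
  ract_proper : IsProperMap fun p : {p : Z × H // σ p.1 = ℋ.r p.2} =>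
      (ract p.1.1 p.1.2 p.2, p.1.1)
  ρ_surj : ∀ u, 𝒢.r u = u → ∃ z, ρ z = u
  σ_surj : ∀ v, ℋ.r v = v → ∃ z, σ z = v
  ρ_orbit : ∀ y z, ρ y = ρ z → ∃ η h, ract z η h = y
  σ_orbit : ∀ y z, σ y = σ z → ∃ γ h, lact γ z h = y

open Set

universe u v

theorem exists_continuous_hasCompactSupport_eqOn {X : Type u} {E : Type v} [TopologicalSpace X]
    [T2Space X] [LocallyCompactSpace X] [NormalSpace X] [TopologicalSpace E] [AddCommMonoid E]
    [Module ℝ E] [ContinuousSMul ℝ E] [TietzeExtension.{u, v} E] {C K : Set X} (hC : IsClosed C)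
    (hK : IsCompact K) {g : X → E} (hg : ContinuousOn g C) (hgK : C ∩ Function.support g ⊆ K) :
    ∃ F : X → E, Continuous F ∧ HasCompactSupport F ∧ EqOn F g C := by
  obtain ⟨f, hf⟩ := ContinuousMap.exists_restrict_eq hC ⟨_, hg.domRestrict⟩
  obtain ⟨χ, hχK, -, hχc, -⟩ :=
    exists_continuous_one_zero_of_isCompact hK isClosed_empty (disjoint_empty K)
  refine ⟨⇑χ • ⇑f, χ.continuous.smul f.continuous, hχc.smul_right, fun x hx => ?_⟩
  have hfx : f x = g x := congr($hf ⟨x, hx⟩)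
  by_cases hgx : g x = 0
  · simp [hfx, hgx]
  · simp [hfx, hχK (hgK ⟨hx, hgx⟩)]

namespace GpdEquiv

variable {G H Z : Type*} [TopologicalSpace G] [TopologicalSpace H] [TopologicalSpace Z]
  {𝒢 : TopGpd G} {ℋ : TopGpd H} (E : GpdEquiv 𝒢 ℋ Z)

def IsTotalLAct (aL : G → Z → Z) : Prop :=
  ∀ γ z (h : 𝒢.s γ = E.ρ z), aL γ z = E.lact γ z h

def IsTotalRAct (aR : Z → H → Z) : Prop :=
  ∀ z η (h : E.σ z = ℋ.r η), aR z η = E.ract z η h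

theorem s_ρ (w : Z) : 𝒢.s (E.ρ w) = E.ρ w := by
  simpa only [E.ρ_unit] using 𝒢.s_r (E.ρ w)

variable {E} {aL : G → Z → Z}

theorem act_ρ (haL : E.IsTotalLAct aL) (w : Z) : aL (E.ρ w) w = w := by
  rw [haL _ _ (E.s_ρ w), E.lact_unit]

theorem ρ_act (haL : E.IsTotalLAct aL) {γ : G} {w : Z} (h : 𝒢.s γ = E.ρ w) :
    E.ρ (aL γ w) = 𝒢.r γ := by
  rw [haL _ _ h, E.ρ_lact]

theorem σ_act (haL : E.IsTotalLAct aL) {γ : G} {w : Z} (h : 𝒢.s γ = E.ρ w) :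
    E.σ (aL γ w) = E.σ w := by
  rw [haL _ _ h, E.σ_lact]

theorem act_mul (haL : E.IsTotalLAct aL) {a b : G} {w : Z} (hab : 𝒢.s a = 𝒢.r b)
    (hbw : 𝒢.s b = E.ρ w) : aL (𝒢.mul a b hab) w = aL a (aL b w) := by
  rw [haL b w hbw, haL _ w (by rw [𝒢.s_mul, hbw]), haL a _ (by rw [E.ρ_lact, hab]),
    E.lact_mul]

theorem act_inv_act (haL : E.IsTotalLAct aL) {γ : G} {w : Z} (h : 𝒢.s γ = E.ρ w) :
    aL (𝒢.inv γ) (aL γ w) = w := by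
  rw [← act_mul haL (𝒢.s_inv γ) h, 𝒢.inv_mul, h, act_ρ haL]

theorem act_act_inv (haL : E.IsTotalLAct aL) {γ : G} {w : Z} (h : 𝒢.r γ = E.ρ w) :
    aL γ (aL (𝒢.inv γ) w) = w := by
  rw [← act_mul haL (𝒢.r_inv γ).symm (by rw [𝒢.s_inv, h]), 𝒢.mul_inv, h, act_ρ haL]

theorem act_inv_mul_act (haL : E.IsTotalLAct aL) {γ₀ x : G} {z : Z} (h : 𝒢.s γ₀ = 𝒢.r x)
    (hx : 𝒢.r x = E.ρ z) : aL (𝒢.inv (𝒢.mul γ₀ x h)) (aL γ₀ z) = aL (𝒢.inv x) z := by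
  have hρ : 𝒢.s x = E.ρ (aL (𝒢.inv x) z) := by
    rw [ρ_act haL (by rw [𝒢.s_inv, hx]), 𝒢.r_inv]
  conv_lhs => rw [← act_act_inv haL hx, ← act_mul haL h hρ]
  exact act_inv_act haL (by rw [𝒢.s_mul, hρ])

theorem continuousOn_act_inv (haL : E.IsTotalLAct aL) (w : Z) :
    ContinuousOn (fun γ => aL (𝒢.inv γ) w) {γ | 𝒢.r γ = E.ρ w} := by
  have hs : ∀ γ : {γ | 𝒢.r γ = E.ρ w}, 𝒢.s (𝒢.inv γ) = E.ρ w :=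
    fun γ => (𝒢.s_inv γ).trans γ.2
  rw [continuousOn_iff_continuous_domRestrict]
  refine (E.lact_cont.comp (((𝒢.cont_inv.comp continuous_subtype_val).prodMk
    continuous_const).subtype_mk hs)).congr fun γ => (haL _ _ (hs γ)).symm

theorem continuousOn_act_right {aR : Z → H → Z} (haR : E.IsTotalRAct aR) (η : H) :
    ContinuousOn (fun w => aR w η) {w | E.σ w = ℋ.r η} := by
  rw [continuousOn_iff_continuous_domRestrict]
  refine (E.ract_cont.comp ((continuous_subtype_val.prodMk continuous_const).subtype_mk
    fun w : {w | E.σ w = ℋ.r η} => w.2)).congr fun w => (haR _ _ w.2).symm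

theorem isCompact_setOf_act_inv_mem (haL : E.IsTotalLAct aL) (w : Z) {K : Set Z}
    (hK : IsCompact K) : IsCompact {γ | 𝒢.r γ = E.ρ w ∧ aL (𝒢.inv γ) w ∈ K} := by
  have hset : {γ | 𝒢.r γ = E.ρ w ∧ aL (𝒢.inv γ) w ∈ K} =
      (fun p : {p : G × Z // 𝒢.s p.1 = E.ρ p.2} => p.1.1) ''
        ((fun p : {p : G × Z // 𝒢.s p.1 = E.ρ p.2} => (E.lact p.1.1 p.1.2 p.2, p.1.2)) ⁻¹'
          ({w} ×ˢ K)) := by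
    ext γ
    constructor
    · rintro ⟨hγ, hγK⟩
      have hρ : 𝒢.s γ = E.ρ (aL (𝒢.inv γ) w) := by
        rw [ρ_act haL (by rw [𝒢.s_inv, hγ]), 𝒢.r_inv]
      exact ⟨⟨(γ, _), hρ⟩, ⟨(haL _ _ hρ).symm.trans (act_act_inv haL hγ), hγK⟩, rfl⟩
    · rintro ⟨⟨⟨γ, y⟩, hγy⟩, ⟨hw, hy⟩, rfl⟩
      simp only [mem_singleton_iff] at hw
      rw [← haL] at hw
      subst hw
      exact ⟨(ρ_act haL hγy).symm, by rwa [act_inv_act haL hγy]⟩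
  rw [hset]
  exact (E.lact_proper.isCompact_preimage (isCompact_singleton.prod hK)).image
    (continuous_fst.comp continuous_subtype_val)

theorem exists_continuous_hasCompactSupport_eqOn_integrand [T2Space G] [LocallyCompactSpace G]
    [NormalSpace G] (haL : E.IsTotalLAct aL) {aR : Z → H → Z} (haR : E.IsTotalRAct aR)
    {φ ψ : Z → ℂ} (hφ : Continuous φ) (hφs : HasCompactSupport φ) (hψ : Continuous ψ)
    {w : Z} {η : H} (hw : E.σ w = ℋ.r η) :
    ∃ F : G → ℂ, Continuous F ∧ HasCompactSupport F ∧
      EqOn F (fun γ => (starRingEnd ℂ) (φ (aL (𝒢.inv γ) w)) * ψ (aR (aL (𝒢.inv γ) w) η))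
        {γ | 𝒢.r γ = E.ρ w} := by
  have hinv := E.continuousOn_act_inv haL w
  have hσ : MapsTo (fun γ => aL (𝒢.inv γ) w) {γ | 𝒢.r γ = E.ρ w} {y | E.σ y = ℋ.r η} :=
    fun γ hγ => (E.σ_act haL ((𝒢.s_inv γ).trans hγ)).trans hw
  refine exists_continuous_hasCompactSupport_eqOn (isClosed_eq 𝒢.cont_r continuous_const)
    (E.isCompact_setOf_act_inv_mem haL w hφs) ((hφ.comp_continuousOn hinv).star.mul
      (hψ.comp_continuousOn ((E.continuousOn_act_right haR η).comp hinv hσ)))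
    fun γ ⟨hγ, hγφ⟩ => ⟨hγ, subset_tsupport φ fun hφγ => hγφ (by simp [hφγ])⟩

end GpdEquiv

theorem innerH_well_defined_general {G H Z : Type*}
    [TopologicalSpace G] [LocallyCompactSpace G] [T2Space G] [SecondCountableTopology G]
    [MeasurableSpace G]
    [TopologicalSpace H]
    [TopologicalSpace Z]
    (𝒢 : TopGpd G) (ℋ : TopGpd H) (E : GpdEquiv 𝒢 ℋ Z)
    -- Haar system on `G`
    (lamG : G → Measure G)
    (hlamsupp : ∀ u, 𝒢.r u = u → lamG u {γ | 𝒢.r γ ≠ u} = 0)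
    (mG : G → G → G) (hmG : ∀ x y (h : 𝒢.s x = 𝒢.r y), mG x y = 𝒢.mul x y h)
    (hlaminv : ∀ γ (f : G → ℂ), Continuous f → HasCompactSupport f →
      ∫ x, f (mG γ x) ∂(lamG (𝒢.s γ)) = ∫ x, f x ∂(lamG (𝒢.r γ)))
    -- total versions of the actions on `Z`
    (aL : G → Z → Z) (haL : ∀ γ z (h : 𝒢.s γ = E.ρ z), aL γ z = E.lact γ z h)
    (aR : Z → H → Z) (haR : ∀ z η (h : E.σ z = ℋ.r η), aR z η = E.ract z η h)
    -- the functions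
    (φ ψ : Z → ℂ) (hφ : Continuous φ) (hφs : HasCompactSupport φ)
    (hψ : Continuous ψ)
    -- the data: `η ∈ H` and `z, z'` with `s(z) = s(z') = r(η)`
    (η : H) (z z' : Z) (hz : E.σ z = ℋ.r η) (hz' : E.σ z' = ℋ.r η) :
    ∫ γ, (starRingEnd ℂ) (φ (aL (𝒢.inv γ) z)) * ψ (aR (aL (𝒢.inv γ) z) η)
      ∂(lamG (E.ρ z)) =
    ∫ γ, (starRingEnd ℂ) (φ (aL (𝒢.inv γ) z')) * ψ (aR (aL (𝒢.inv γ) z') η)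
      ∂(lamG (E.ρ z')) := by
  set f : Z → G → ℂ := fun w γ =>
    (starRingEnd ℂ) (φ (aL (𝒢.inv γ) w)) * ψ (aR (aL (𝒢.inv γ) w) η)
  have hfiber : ∀ w, ∀ᵐ γ ∂(lamG (E.ρ w)), 𝒢.r γ = E.ρ w :=
    fun w => ae_iff.2 (hlamsupp _ (E.ρ_unit w))
  obtain ⟨γ₀, hγ₀z, hγ₀⟩ := E.σ_orbit z' z (hz'.trans hz.symm)
  rw [← haL] at hγ₀
  obtain ⟨F, hF_cont, hF_supp, hF⟩ :=
    E.exists_continuous_hasCompactSupport_eqOn_integrand haL haR hφ hφs hψ hz'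
  have hF_translate : ∀ x, 𝒢.r x = E.ρ z → F (mG γ₀ x) = f z x := by
    intro x hx
    have h : 𝒢.s γ₀ = 𝒢.r x := hγ₀z.trans hx.symm
    have hr : 𝒢.r (𝒢.mul γ₀ x h) = E.ρ z' := by rw [𝒢.r_mul, ← hγ₀, E.ρ_act haL hγ₀z]
    rw [hmG _ _ h, hF hr]
    simp only [f, ← hγ₀, E.act_inv_mul_act haL h hx]
  calc ∫ γ, f z γ ∂(lamG (E.ρ z))
      = ∫ x, F (mG γ₀ x) ∂(lamG (𝒢.s γ₀)) := by
        rw [hγ₀z]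
        exact integral_congr_ae ((hfiber z).mono fun x hx => (hF_translate x hx).symm)
    _ = ∫ x, F x ∂(lamG (𝒢.r γ₀)) := hlaminv γ₀ F hF_cont hF_supp
    _ = ∫ γ, f z' γ ∂(lamG (E.ρ z')) := by
        rw [← E.ρ_act haL hγ₀z, hγ₀]
        exact integral_congr_ae ((hfiber z').mono fun x hx => hF hx)

/-- the `C_c(H)`-valued pre-inner product
`⟨φ,ψ⟩_H(η) = ∫_G conj(φ(γ⁻¹·z)) ψ(γ⁻¹·z·η) dλ^{r(z)}(γ)` is independent of the
choice of `z` with `s(z) = r(η)`. -/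
theorem innerH_well_defined {G H Z : Type*}
    [TopologicalSpace G] [LocallyCompactSpace G] [T2Space G] [SecondCountableTopology G]
    [MeasurableSpace G] [BorelSpace G]
    [TopologicalSpace H] [LocallyCompactSpace H] [T2Space H] [SecondCountableTopology H]
    [TopologicalSpace Z] [LocallyCompactSpace Z] [T2Space Z] [SecondCountableTopology Z]
    (𝒢 : TopGpd G) (ℋ : TopGpd H) (E : GpdEquiv 𝒢 ℋ Z)
    -- Haar system on `G`
    (lamG : G → Measure G) (hlamreg : ∀ u, (lamG u).Regular)
    (hlamsupp : ∀ u, 𝒢.r u = u → lamG u {γ | 𝒢.r γ ≠ u} = 0)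
    (mG : G → G → G) (hmG : ∀ x y (h : 𝒢.s x = 𝒢.r y), mG x y = 𝒢.mul x y h)
    (hlaminv : ∀ γ (f : G → ℂ), Continuous f → HasCompactSupport f →
      ∫ x, f (mG γ x) ∂(lamG (𝒢.s γ)) = ∫ x, f x ∂(lamG (𝒢.r γ)))
    -- total versions of the actions on `Z`
    (aL : G → Z → Z) (haL : ∀ γ z (h : 𝒢.s γ = E.ρ z), aL γ z = E.lact γ z h)
    (aR : Z → H → Z) (haR : ∀ z η (h : E.σ z = ℋ.r η), aR z η = E.ract z η h)
    -- the functions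
    (φ ψ : Z → ℂ) (hφ : Continuous φ) (hφs : HasCompactSupport φ)
    (hψ : Continuous ψ) (hψs : HasCompactSupport ψ)
    -- the data: `η ∈ H` and `z, z'` with `s(z) = s(z') = r(η)`
    (η : H) (z z' : Z) (hz : E.σ z = ℋ.r η) (hz' : E.σ z' = ℋ.r η) :
    ∫ γ, (starRingEnd ℂ) (φ (aL (𝒢.inv γ) z)) * ψ (aR (aL (𝒢.inv γ) z) η)
      ∂(lamG (E.ρ z)) =
    ∫ γ, (starRingEnd ℂ) (φ (aL (𝒢.inv γ) z')) * ψ (aR (aL (𝒢.inv γ) z') η)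
      ∂(lamG (E.ρ z')) :=
  innerH_well_defined_general 𝒢 ℋ E lamG hlamsupp mG hmG hlaminv aL haL aR haR φ ψ hφ hφs hψ η z z'
    hz hz'
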